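/- arXiv:1802.01107 — 3 statements merged into one kernel-verified Lean document; each statement's English description precedes it below -/
import Mathlib

section
/- Every alternating word w ∈ 𝒜 can be written uniquely as w = y₀ s₁ y₁ s₂ ⋯ y_{l−1} s_l y_l, where each y_i ∈ {b, b⁻¹} except that y₀ and/or y_l may be empty, each s_i ∈ S_a⁺ ∪ S_a⁻, and the s_i alternate between S_a⁺ and S_a⁻ (there is no i with s_i, s_{i+1} both in S_a⁺ or both in S_a⁻). -/
open FreeGroup

abbrev W : Type := FreeGroup (Fin 2)

/-- The set of alternating words: reduced words whose letters alternate
between the two generators `a` (index 0) and `b` (index 1). -/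
def Alt : Set W := {w | List.Chain' (fun p q : Fin 2 × Bool => p.1 ≠ q.1) w.toWord}

/-- `S_a⁺`: alternating words starting and ending with `a`, containing no `a⁻¹`. -/
def SaP : Set W :=
  {w | w ∈ Alt ∧ w.toWord.head? = some ((0 : Fin 2), true) ∧
    w.toWord.getLast? = some ((0 : Fin 2), true) ∧ ((0 : Fin 2), false) ∉ w.toWord}

/-- `S_a⁻`: alternating words starting and ending with `a⁻¹`, containing no `a`. -/
def SaN : Set W :=
  {w | w ∈ Alt ∧ w.toWord.head? = some ((0 : Fin 2), false) ∧
    w.toWord.getLast? = some ((0 : Fin 2), false) ∧ ((0 : Fin 2), true) ∉ w.toWord}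

/-- The single letters `b` and `b⁻¹`. -/
def Blet : Set W :=
  {w | w = FreeGroup.mk [((1 : Fin 2), true)] ∨ w = FreeGroup.mk [((1 : Fin 2), false)]}

/-- Data of an `a`-decomposition: a number `l` of blocks, the blocks
`s₁, …, s_l` and the separating letters `y₀, …, y_l`. -/
def ADecompData : Type := Σ l : ℕ, (Fin l → W) × (Fin (l + 1) → W)

/-- `d` is an `a`-decomposition of `w`: `w = y₀ s₁ y₁ ⋯ y_{l-1} s_l y_l` as reduced
words, where the `sᵢ` lie in `S_a⁺ ∪ S_a⁻` and alternate between `S_a⁺` and `S_a⁻`,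
the interior `yᵢ` are single letters `b^{±1}`, and `y₀`, `y_l` are single letters
`b^{±1}` or empty. -/
def IsADecomp (w : W) (d : ADecompData) : Prop :=
  (∀ i : Fin d.1, d.2.1 i ∈ SaP ∪ SaN) ∧
  (∀ i : Fin (d.1 + 1), (i.1 = 0 ∨ i.1 = d.1) → (d.2.2 i = 1 ∨ d.2.2 i ∈ Blet)) ∧
  (∀ i : Fin (d.1 + 1), i.1 ≠ 0 → i.1 ≠ d.1 → d.2.2 i ∈ Blet) ∧
  (∀ (i : ℕ) (h : i + 1 < d.1),
    (d.2.1 ⟨i, Nat.lt_of_succ_lt h⟩ ∈ SaP ↔ d.2.1 ⟨i + 1, h⟩ ∈ SaN)) ∧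
  w.toWord = (d.2.2 0).toWord ++
    (List.ofFn fun i : Fin d.1 => (d.2.1 i).toWord ++ (d.2.2 i.succ).toWord).flatten

/-!
A leading `b`-letter of an alternating word can only be `y₀`. The decompositions of a word
`a^ε b^β t` are exactly those of `t` with `a^ε b^β` either prepended to the first block, when that
block starts with `a^ε` and so stays in the same class `S_a^±`, or standing alone as the block `a^ε`
followed by the separator `b^β`. Induction on the word then gives existence and uniqueness. All pieces of a
decomposition are reduced words, so it suffices to decompose the list `w.toWord`.
-/

theorem ExistsUnique.of_forall_iff_exists {α β : Sort*} {P : α → Prop} {Q : β → Prop}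
    (hQ : ∃! b, Q b) (f : β → α) (h : ∀ a, P a ↔ ∃ b, Q b ∧ f b = a) : ∃! a, P a := by
  obtain ⟨b, hb, hb_unique⟩ := hQ
  refine ⟨f b, (h _).2 ⟨b, hb, rfl⟩, fun a ha => ?_⟩
  obtain ⟨b', hb', rfl⟩ := (h a).1 ha
  rw [hb_unique b' hb']

theorem FreeGroup.IsReduced.of_isChain_ne {α : Type*} {l : List (α × Bool)}
    (h : l.IsChain fun p q => p.1 ≠ q.1) : IsReduced l :=
  h.imp fun _ _ hne heq => absurd heq hne

namespace ADecomp

/-- `IsBlock ε s` says `s = a^ε b^{±1} a^ε ⋯ b^{±1} a^ε`: these are the reduced words of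
`S_a⁺` (`ε = true`) and `S_a⁻` (`ε = false`). -/
inductive IsBlock (ε : Bool) : List (Fin 2 × Bool) → Prop
  | single : IsBlock ε [(0, ε)]
  | cons (β : Bool) {s : List (Fin 2 × Bool)} : IsBlock ε s → IsBlock ε ((0, ε) :: (1, β) :: s)

def IsBLetter (y : List (Fin 2 × Bool)) : Prop := ∃ β, y = [(1, β)]

def word (bs : List (List (Fin 2 × Bool) × List (Fin 2 × Bool))) : List (Fin 2 × Bool) :=
  (bs.map fun p => p.1 ++ p.2).flatten

@[simp]
theorem word_nil : word [] = [] := rfl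

@[simp]
theorem word_cons (s y : List (Fin 2 × Bool))
    (bs : List (List (Fin 2 × Bool) × List (Fin 2 × Bool))) :
    word ((s, y) :: bs) = s ++ y ++ word bs := by
  simp [word]

/-- An `a`-decomposition `y₀ s₁ y₁ ⋯ s_l y_l` at the level of reduced words, with `bs` the list of
pairs `(sᵢ, yᵢ)`. Consecutive blocks lie in different classes `S_a^±` exactly when their first
letters differ. -/
structure IsDecomp (w y₀ : List (Fin 2 × Bool))
    (bs : List (List (Fin 2 × Bool) × List (Fin 2 × Bool))) : Prop where
  head : y₀ = [] ∨ IsBLetter y₀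
  block : ∀ p ∈ bs, (∃ ε, IsBlock ε p.1) ∧ (p.2 = [] ∨ IsBLetter p.2)
  chain : bs.IsChain fun p q => IsBLetter p.2 ∧ p.1.head? ≠ q.1.head?
  eq : w = y₀ ++ word bs

def prependAB (ε β : Bool) : List (List (Fin 2 × Bool) × List (Fin 2 × Bool)) →
    List (List (Fin 2 × Bool) × List (Fin 2 × Bool))
  | [] => [([(0, ε)], [(1, β)])]
  | (s, y) :: bs =>
    if s.head? = some (0, ε) then ((0, ε) :: (1, β) :: s, y) :: bs
    else ([(0, ε)], [(1, β)]) :: (s, y) :: bs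

variable {ε β : Bool} {s w y₀ t : List (Fin 2 × Bool)}
  {bs : List (List (Fin 2 × Bool) × List (Fin 2 × Bool))} {v : W}

theorem IsBlock.head?_eq (h : IsBlock ε s) : s.head? = some (0, ε) := by
  cases h <;> rfl

theorem IsBlock.ne_nil (h : IsBlock ε s) : s ≠ [] := by
  cases h <;> simp

theorem IsBlock.sign_iff {δ : Bool} (h : IsBlock ε s) : IsBlock δ s ↔ δ = ε := by
  refine ⟨fun hδ => ?_, fun hδ => hδ ▸ h⟩
  simpa using hδ.head?_eq.symm.trans h.head?_eq

theorem isBlock_iff : IsBlock ε s ↔ s.IsChain (fun p q => p.1 ≠ q.1) ∧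
    s.head? = some (0, ε) ∧ s.getLast? = some (0, ε) ∧ (0, !ε) ∉ s := by
  constructor
  · intro h
    induction h with
    | single => simp
    | cons β hs ih =>
      obtain ⟨hc, hh, hl, hm⟩ := ih
      obtain ⟨z, s, rfl⟩ := List.exists_cons_of_ne_nil hs.ne_nil
      simp only [List.head?_cons, Option.some.injEq] at hh
      subst hh
      exact ⟨List.isChain_cons_cons.2 ⟨by simp, List.isChain_cons_cons.2 ⟨by simp, hc⟩⟩, rfl,
        by simpa using hl, by simpa using hm⟩
  · rintro ⟨hc, hh, hl, hm⟩
    induction s using List.twoStepInduction with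
    | nil => simp at hh
    | singleton x =>
      obtain rfl : x = (0, ε) := by simpa using hh
      exact .single
    | cons_cons x y t ih _ =>
      obtain rfl : x = (0, ε) := by simpa using hh
      obtain ⟨j, β⟩ := y
      obtain rfl : j = 1 := by
        have : (0 : Fin 2) ≠ j := (List.isChain_cons_cons.1 hc).1
        omega
      obtain ⟨⟨k, δ⟩, t, rfl⟩ := List.exists_cons_of_ne_nil (fun ht : t = [] => by simp [ht] at hl)
      obtain rfl : k = 0 := by
        have : (1 : Fin 2) ≠ k := (List.isChain_cons_cons.1 hc.tail).1
        omega
      obtain rfl : δ = ε := by cases δ <;> cases ε <;> simp_all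
      exact .cons β (ih hc.tail.tail rfl (by simpa using hl) (by simp_all))

theorem IsBlock.isChain (h : IsBlock ε s) : s.IsChain fun p q => p.1 ≠ q.1 :=
  (isBlock_iff.1 h).1

theorem IsBlock.true_iff_false_iff_head?_ne {ε' : Bool} {s' : List (Fin 2 × Bool)}
    (h : IsBlock ε s) (h' : IsBlock ε' s') :
    (IsBlock true s ↔ IsBlock false s') ↔ s.head? ≠ s'.head? := by
  rw [h.sign_iff, h'.sign_iff, h.head?_eq, h'.head?_eq]
  cases ε <;> cases ε' <;> simp

theorem IsDecomp.y₀_eq_nil (h : IsDecomp w y₀ bs) (hw : ∀ x ∈ w.head?, x.1 = 0) : y₀ = [] := by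
  rcases h.head with h₀ | ⟨β, rfl⟩
  · exact h₀
  · simp [h.eq] at hw

theorem isDecomp_cons_iff {s y : List (Fin 2 × Bool)} :
    IsDecomp w [] ((s, y) :: bs) ↔ (∃ ε, IsBlock ε s) ∧ (y = [] ∨ IsBLetter y) ∧
      (∀ q ∈ bs.head?, IsBLetter y ∧ s.head? ≠ q.1.head?) ∧ IsDecomp (word bs) [] bs ∧
      w = s ++ y ++ word bs := by
  constructor
  · rintro ⟨-, hblock, hchain, rfl⟩
    rw [List.isChain_cons] at hchain
    exact ⟨(hblock _ List.mem_cons_self).1, (hblock _ List.mem_cons_self).2, hchain.1,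
      ⟨Or.inl rfl, fun p hp => hblock p (List.mem_cons_of_mem _ hp), hchain.2, rfl⟩, by simp⟩
  · rintro ⟨hs, hy, hnext, hbs, rfl⟩
    refine ⟨Or.inl rfl, ?_, List.isChain_cons.2 ⟨hnext, hbs.chain⟩, by simp⟩
    exact List.forall_mem_cons.2 ⟨⟨hs, hy⟩, hbs.block⟩

theorem isDecomp_nil_iff : IsDecomp [] [] bs ↔ bs = [] := by
  refine ⟨fun h => ?_, fun h => h ▸ ⟨Or.inl rfl, by simp, .nil, rfl⟩⟩
  obtain _ | ⟨⟨s, y⟩, bs⟩ := bs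
  · rfl
  · obtain ⟨⟨ε, hs⟩, -, -, -, heq⟩ := isDecomp_cons_iff.1 h
    simp [hs.ne_nil] at heq

theorem isDecomp_singleton_iff : IsDecomp [(0, ε)] [] bs ↔ bs = [([(0, ε)], [])] := by
  refine ⟨fun h => ?_, fun h => h ▸ isDecomp_cons_iff.2
    ⟨⟨ε, .single⟩, Or.inl rfl, by simp, isDecomp_nil_iff.2 rfl, rfl⟩⟩
  obtain _ | ⟨⟨s, y⟩, bs⟩ := bs
  · simpa using h.eq
  obtain ⟨⟨δ, hs⟩, -, -, hbs, heq⟩ := isDecomp_cons_iff.1 h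
  rw [List.append_assoc, List.singleton_eq_append_iff] at heq
  obtain ⟨rfl, -⟩ | ⟨rfl, hrest⟩ := heq
  · exact absurd rfl hs.ne_nil
  · obtain ⟨rfl, hword⟩ := List.append_eq_nil_iff.1 hrest
    obtain rfl := isDecomp_nil_iff.1 (by rwa [hword] at hbs)
    rfl

theorem isDecomp_b_cons_iff : IsDecomp ((1, β) :: t) y₀ bs ↔ y₀ = [(1, β)] ∧ IsDecomp t [] bs := by
  refine ⟨fun h => ?_, fun ⟨hy₀, h⟩ => ⟨Or.inr ⟨β, hy₀⟩, h.block, h.chain, by simp [hy₀, h.eq]⟩⟩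
  rcases h.head with rfl | ⟨β', rfl⟩
  · obtain _ | ⟨⟨s, y⟩, bs⟩ := bs
    · simpa using h.eq
    · obtain ⟨⟨δ, hs⟩, -⟩ := h.block _ List.mem_cons_self
      have := congrArg List.head? h.eq
      simp [List.head?_append, hs.head?_eq] at this
  · obtain ⟨rfl, ht⟩ : β' = β ∧ t = word bs := by simpa [eq_comm] using h.eq
    exact ⟨rfl, Or.inl rfl, h.block, h.chain, ht⟩

theorem IsDecomp.a_b_cons_prependAB (h : IsDecomp t [] bs) :
    IsDecomp ((0, ε) :: (1, β) :: t) [] (prependAB ε β bs) := by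
  obtain _ | ⟨⟨s, y⟩, bs⟩ := bs
  · obtain rfl : t = [] := h.eq
    exact isDecomp_cons_iff.2 ⟨⟨ε, .single⟩, Or.inr ⟨β, rfl⟩, by simp, h, rfl⟩
  obtain ⟨⟨δ, hs⟩, hy, hnext, hbs, rfl⟩ := isDecomp_cons_iff.1 h
  by_cases hδ : δ = ε
  · subst hδ
    simp only [prependAB, hs.head?_eq, if_true]
    exact isDecomp_cons_iff.2
      ⟨⟨δ, hs.cons β⟩, hy, by simpa [hs.head?_eq] using hnext, hbs, by simp⟩
  · simp only [prependAB, hs.head?_eq, Option.some.injEq, Prod.mk.injEq, true_and, hδ,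
      if_false]
    exact isDecomp_cons_iff.2 ⟨⟨ε, .single⟩, Or.inr ⟨β, rfl⟩,
      by simp [IsBLetter, hs.head?_eq, Ne.symm hδ], h, by simp⟩

theorem IsDecomp.exists_prependAB_eq (h : IsDecomp ((0, ε) :: (1, β) :: t) [] bs) :
    ∃ bs', IsDecomp t [] bs' ∧ prependAB ε β bs' = bs := by
  obtain _ | ⟨⟨s, y⟩, bs⟩ := bs
  · simpa using h.eq
  obtain ⟨⟨δ, hs⟩, hy, hnext, hbs, heq⟩ := isDecomp_cons_iff.1 h
  cases hs with
  | single =>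
    obtain ⟨rfl, heq⟩ : ε = δ ∧ (1, β) :: t = y ++ word bs := by simpa [eq_comm] using heq
    have hyB : IsBLetter y := by
      obtain _ | ⟨q, bs⟩ := bs
      · rcases hy with rfl | hy
        · simp at heq
        · exact hy
      · exact (hnext q rfl).1
    obtain ⟨β', rfl⟩ := hyB
    obtain ⟨rfl, rfl⟩ : β' = β ∧ t = word bs := by simpa [eq_comm] using heq
    refine ⟨bs, hbs, ?_⟩
    obtain _ | ⟨⟨s', y'⟩, bs⟩ := bs
    · rfl
    · have hs' : s'.head? ≠ some (0, ε) := fun h' => (hnext _ rfl).2 (by simp [h'])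
      simp [prependAB, hs']
  | @cons β' s' hs' =>
    simp only [List.cons_append, List.cons.injEq, Prod.mk.injEq, true_and] at heq
    obtain ⟨rfl, rfl, rfl⟩ := heq
    refine ⟨(s', y) :: bs, isDecomp_cons_iff.2 ⟨⟨ε, hs'⟩, hy, ?_, hbs, rfl⟩, ?_⟩
    · simpa [hs'.head?_eq] using hnext
    · simp [prependAB, hs'.head?_eq]

theorem isDecomp_a_b_cons_iff :
    IsDecomp ((0, ε) :: (1, β) :: t) [] bs ↔ ∃ bs', IsDecomp t [] bs' ∧ prependAB ε β bs' = bs :=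
  ⟨IsDecomp.exists_prependAB_eq, fun ⟨_, h, hbs⟩ => hbs ▸ h.a_b_cons_prependAB⟩

theorem existsUnique_isDecomp_of_head? (hw : w.IsChain fun p q => p.1 ≠ q.1)
    (hw₀ : ∀ x ∈ w.head?, x.1 = 0) : ∃! bs, IsDecomp w [] bs := by
  induction w using List.twoStepInduction with
  | nil => exact ⟨[], isDecomp_nil_iff.2 rfl, fun _ h => isDecomp_nil_iff.1 h⟩
  | singleton x =>
    obtain ⟨i, ε⟩ := x
    obtain rfl : i = 0 := hw₀ _ rfl
    exact ⟨_, isDecomp_singleton_iff.2 rfl, fun _ h => isDecomp_singleton_iff.1 h⟩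
  | cons_cons x y t ih _ =>
    obtain ⟨i, ε⟩ := x
    obtain ⟨j, β⟩ := y
    obtain rfl : i = 0 := hw₀ _ rfl
    obtain rfl : j = 1 := by
      have : (0 : Fin 2) ≠ j := (List.isChain_cons_cons.1 hw).1
      omega
    refine (ih hw.tail.tail fun z hz => ?_).of_forall_iff_exists _ fun _ => isDecomp_a_b_cons_iff
    have : (1 : Fin 2) ≠ z.1 := (List.isChain_cons.1 hw.tail).1 z hz
    omega

theorem existsUnique_isDecomp (hw : w.IsChain fun p q => p.1 ≠ q.1) :
    ∃! p : List (Fin 2 × Bool) × List (List (Fin 2 × Bool) × List (Fin 2 × Bool)),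
      IsDecomp w p.1 p.2 := by
  by_cases hw₀ : ∀ x ∈ w.head?, x.1 = 0
  · refine (existsUnique_isDecomp_of_head? hw hw₀).of_forall_iff_exists (fun bs => ([], bs))
      fun p => ?_
    refine ⟨fun h => ⟨p.2, h.y₀_eq_nil hw₀ ▸ h, ?_⟩, fun ⟨bs, h, hp⟩ => hp ▸ h⟩
    rw [← h.y₀_eq_nil hw₀]
  · obtain ⟨β, t, rfl⟩ : ∃ β t, w = (1, β) :: t := by
      obtain _ | ⟨⟨i, β⟩, t⟩ := w
      · simp at hw₀
      · have : i ≠ 0 := by simpa using hw₀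
        exact ⟨β, t, by rw [show i = 1 by omega]⟩
    refine (existsUnique_isDecomp_of_head? hw.tail fun z hz => ?_).of_forall_iff_exists
      (fun bs => ([(1, β)], bs)) fun p => ?_
    · have : (1 : Fin 2) ≠ z.1 := (List.isChain_cons.1 hw).1 z hz
      omega
    · rw [isDecomp_b_cons_iff]
      exact ⟨fun ⟨h₀, h⟩ => ⟨p.2, h, by rw [← h₀]⟩, fun ⟨bs, h, hp⟩ => hp ▸ ⟨rfl, h⟩⟩

theorem isReduced_of_eq_nil_or_isBLetter {y : List (Fin 2 × Bool)} (h : y = [] ∨ IsBLetter y) :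
    IsReduced y := by
  rcases h with rfl | ⟨β, rfl⟩
  exacts [.nil, .singleton]

theorem IsDecomp.isReduced (h : IsDecomp w y₀ bs) :
    IsReduced y₀ ∧ ∀ p ∈ bs, IsReduced p.1 ∧ IsReduced p.2 := by
  refine ⟨isReduced_of_eq_nil_or_isBLetter h.head, fun p hp => ?_⟩
  obtain ⟨⟨ε, hs⟩, hy⟩ := h.block p hp
  exact ⟨IsReduced.of_isChain_ne hs.isChain, isReduced_of_eq_nil_or_isBLetter hy⟩

theorem mem_SaP_iff : v ∈ SaP ↔ IsBlock true v.toWord := isBlock_iff.symm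

theorem mem_SaN_iff : v ∈ SaN ↔ IsBlock false v.toWord := isBlock_iff.symm

theorem mem_SaP_union_SaN_iff : v ∈ SaP ∪ SaN ↔ ∃ ε, IsBlock ε v.toWord := by
  rw [Set.mem_union, mem_SaP_iff, mem_SaN_iff, Bool.exists_bool, or_comm]

theorem mem_Blet_iff : v ∈ Blet ↔ IsBLetter v.toWord := by
  constructor
  · rintro (rfl | rfl) <;> exact ⟨_, rfl⟩
  · rintro ⟨β, hβ⟩
    rw [← mk_toWord (x := v), hβ]
    cases β
    exacts [Or.inr rfl, Or.inl rfl]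

theorem eq_one_or_mem_Blet_iff : v = 1 ∨ v ∈ Blet ↔ v.toWord = [] ∨ IsBLetter v.toWord := by
  rw [toWord_eq_nil_iff, mem_Blet_iff]

def toWords (d : ADecompData) :
    List (Fin 2 × Bool) × List (List (Fin 2 × Bool) × List (Fin 2 × Bool)) :=
  ((d.2.2 0).toWord, List.ofFn fun i => ((d.2.1 i).toWord, (d.2.2 i.succ).toWord))

theorem toWords_injective : Function.Injective toWords := by
  rintro ⟨l, S, Y⟩ ⟨l', S', Y'⟩ h
  simp only [toWords, Prod.mk.injEq] at h
  obtain ⟨h₀, h⟩ := h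
  obtain rfl : l = l' := by simpa using congrArg List.length h
  rw [List.ofFn_inj] at h
  have hS : S = S' := funext fun i => toWord_injective (congrArg Prod.fst (congrFun h i))
  have hY : Y = Y' := funext fun i => Fin.cases (toWord_injective h₀)
    (fun j => toWord_injective (congrArg Prod.snd (congrFun h j))) i
  rw [hS, hY]

theorem exists_toWords_eq (hy₀ : IsReduced y₀) (hbs : ∀ p ∈ bs, IsReduced p.1 ∧ IsReduced p.2) :
    ∃ d, toWords d = (y₀, bs) := by
  refine ⟨⟨bs.length, fun i => mk bs[i].1, Fin.cons (mk y₀) fun i => mk bs[i].2⟩, ?_⟩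
  simp only [toWords, Fin.cons_zero, Fin.cons_succ, toWord_mk, hy₀.reduce_eq, Prod.mk.injEq,
    true_and]
  refine List.ext_getElem (by simp) fun i _ _ => ?_
  obtain ⟨h₁, h₂⟩ := hbs _ (List.getElem_mem (l := bs) (by assumption))
  simp [h₁.reduce_eq, h₂.reduce_eq]

theorem isADecomp_iff {w : W} {d : ADecompData} :
    IsADecomp w d ↔ IsDecomp w.toWord (toWords d).1 (toWords d).2 := by
  obtain ⟨l, S, Y⟩ := d
  have hword : word (List.ofFn fun i => ((S i).toWord, (Y i.succ).toWord)) =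
      (List.ofFn fun i => (S i).toWord ++ (Y i.succ).toWord).flatten := by
    simp [word, List.map_ofFn, Function.comp_def]
  simp only [IsADecomp, toWords, mem_SaP_iff, mem_SaN_iff]
  constructor
  · rintro ⟨hS, hends, hinner, hsign, hw⟩
    refine ⟨eq_one_or_mem_Blet_iff.1 (hends 0 (Or.inl rfl)),
      List.forall_mem_ofFn_iff.2 fun j => ⟨mem_SaP_union_SaN_iff.1 (hS j), ?_⟩,
      List.isChain_ofFn.2 fun i hi => ⟨?_, ?_⟩, hword ▸ hw⟩
    · rw [← eq_one_or_mem_Blet_iff]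
      by_cases hj : j.1 + 1 = l
      · exact hends _ (Or.inr (by simpa using hj))
      · exact Or.inr (hinner _ (by simp) (by simpa using hj))
    · exact mem_Blet_iff.1 (hinner _ (by simp) (by simp; omega))
    · obtain ⟨ε, h⟩ := mem_SaP_union_SaN_iff.1 (hS ⟨i, by omega⟩)
      obtain ⟨ε', h'⟩ := mem_SaP_union_SaN_iff.1 (hS ⟨i + 1, hi⟩)
      exact (h.true_iff_false_iff_head?_ne h').1 (hsign i hi)
  · rintro ⟨hhead, hblock, hchain, hw⟩
    rw [List.forall_mem_ofFn_iff] at hblock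
    rw [List.isChain_ofFn] at hchain
    refine ⟨fun j => mem_SaP_union_SaN_iff.2 (hblock j).1, fun i _ => ?_, fun i hi₀ hil => ?_,
      fun i hi => ?_, hword ▸ hw⟩
    · cases i using Fin.cases with
      | zero => exact eq_one_or_mem_Blet_iff.2 hhead
      | succ j => exact eq_one_or_mem_Blet_iff.2 (hblock j).2
    · cases i using Fin.cases with
      | zero => exact absurd rfl hi₀
      | succ j => exact mem_Blet_iff.2 (hchain j (by simp at hil; omega)).1
    · obtain ⟨ε, h⟩ := (hblock ⟨i, by omega⟩).1
      obtain ⟨ε', h'⟩ := (hblock ⟨i + 1, hi⟩).1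
      exact (h.true_iff_false_iff_head?_ne h').2 (hchain i hi).2

end ADecomp

open ADecomp in
/-- **Proposition (a-decomposition).** Every alternating word `w ∈ 𝒜` admits a unique
`a`-decomposition `w = y₀ s₁ y₁ s₂ ⋯ y_{l-1} s_l y_l`. -/
theorem adecomp_existsUnique (w : W) (hw : w ∈ Alt) :
    ∃! d : ADecompData, IsADecomp w d := by
  obtain ⟨⟨y₀, bs⟩, hdec, hunique⟩ := existsUnique_isDecomp hw
  obtain ⟨d, hd⟩ := exists_toWords_eq hdec.isReduced.1 hdec.isReduced.2
  refine ⟨d, isADecomp_iff.2 (by rwa [hd]), fun e he => toWords_injective ?_⟩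
  rw [hd]
  exact hunique _ (isADecomp_iff.1 he)
end

section
/- The maps α, β : 𝒜 → 𝒜 satisfy: (1) α(w⁻¹) = α(w)⁻¹ and β(w⁻¹) = β(w)⁻¹ for all w ∈ 𝒜; (2) ψ∘α = β∘ψ and ψ∘β = α∘ψ, where ψ is the automorphism of F₂ interchanging a and b; (3) α(α(w)) = α(w) and |α(w)| ≤ |w| with equality if and only if α(w) = w, and analogously for β; (4) if v₁ x v₂ is an alternating word with v₁, v₂ ∈ 𝒜 and x ∈ {a, a⁻¹}, then α(v₁ x v₂) is equal in F₂ to the (possibly non-reduced) product α(v₁ x)·x⁻¹·α(x v₂), and analogously for β with x ∈ {b, b⁻¹}. -/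
open FreeGroup

/-- The word map underlying `α`: repeatedly merge two consecutive `a`-letters of the
same sign across the single `b`-letter separating them (replacing each block of the
`a`-decomposition lying in `S_a⁺` by `a` and each block in `S_a⁻` by `a⁻¹`). -/
def goA : List (Fin 2 × Bool) → List (Fin 2 × Bool)
  | x :: y :: z :: rest =>
      if x.1 = 0 ∧ y.1 = 1 ∧ z.1 = 0 ∧ x.2 = z.2 then goA (x :: rest)
      else x :: goA (y :: z :: rest)
  | l => l
termination_by l => l.length

/-- The word map underlying `β`. -/
def goB : List (Fin 2 × Bool) → List (Fin 2 × Bool)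
  | x :: y :: z :: rest =>
      if x.1 = 1 ∧ y.1 = 0 ∧ z.1 = 1 ∧ x.2 = z.2 then goB (x :: rest)
      else x :: goB (y :: z :: rest)
  | l => l
termination_by l => l.length

/-- The map `α : 𝒜 → 𝒜`. -/
def alphaF (w : W) : W := FreeGroup.mk (goA w.toWord)

/-- The map `β : 𝒜 → 𝒜`. -/
def betaF (w : W) : W := FreeGroup.mk (goB w.toWord)

/-- The automorphism `ψ` of `F₂` interchanging the generators `a` and `b`. -/
def psiF : W →* W := FreeGroup.map (fun i : Fin 2 => if i = 0 then 1 else 0)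

/-- The single letter `x^s` for generator `x` of index `i` and sign `s`. -/
def letter (i : Fin 2) (s : Bool) : W := FreeGroup.mk [(i, s)]

/-!
`goA` scans a word from the left, keeping the current `a`-letter `x` and deleting every following
pair `y x` with `y` a `b`-letter; on an alternating word this shrinks each block of the
`a`-decomposition to its first letter. Deletion only shortens, and the output contains no pattern
`x y x`, so `goA` is idempotent and fixes exactly the words it does not shorten. The pattern `x y x`
is a palindrome whose letter-wise inverse has the same shape, so `goA` commutes with `invRev`. When
the scan reaches an `a`-letter `c`, its current letter is `c` whatever came before, so the scan of
`l ++ c :: r` is that of `l ++ [c]` followed by that of `c :: r`: this is the product formula.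
Finally `ψ` conjugates `goA` into `goB`, so `β = ψ ∘ α ∘ ψ` and every statement about `β` is
transported from the corresponding one about `α`.
-/

abbrev IsAlternating (l : List (Fin 2 × Bool)) : Prop := l.IsChain fun p q => p.1 ≠ q.1

def MergesA (x y z : Fin 2 × Bool) : Prop := x.1 = 0 ∧ y.1 = 1 ∧ z.1 = 0 ∧ x.2 = z.2

section Word

variable {x y z c : Fin 2 × Bool} {l r : List (Fin 2 × Bool)}

theorem MergesA.eq (h : MergesA x y z) : x = z := Prod.ext (h.1.trans h.2.2.1.symm) h.2.2.2

theorem IsAlternating.of_cons_cons_cons (h : IsAlternating (x :: y :: z :: r))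
    (hxz : x.1 = z.1) : IsAlternating (x :: r) := by
  have hz : IsAlternating (z :: r) := h.tail.tail
  cases r with
  | nil => exact List.isChain_singleton x
  | cons w r =>
    exact List.isChain_cons_cons.mpr ⟨hxz ▸ (List.isChain_cons_cons.mp hz).1, hz.tail⟩

theorem goA_of_length_le_two (h : l.length ≤ 2) : goA l = l :=
  goA.eq_2 l fun _ _ _ _ hl => by subst hl; simp at h

theorem goA_of_mergesA (h : MergesA x y z) : goA (x :: y :: z :: r) = goA (x :: r) := by
  rw [goA.eq_1]; exact if_pos h

theorem goA_of_not_mergesA (h : ¬MergesA x y z) :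
    goA (x :: y :: z :: r) = x :: goA (y :: z :: r) := by
  rw [goA.eq_1]; exact if_neg h

theorem goA_cons_cons (h : ¬(x.1 = 0 ∧ y.1 = 1)) : goA (x :: y :: r) = x :: goA (y :: r) := by
  cases r with
  | nil => simp [goA_of_length_le_two]
  | cons z r => exact goA_of_not_mergesA fun hm => h ⟨hm.1, hm.2.1⟩

theorem exists_goA_cons_eq_cons (x : Fin 2 × Bool) : ∀ l, ∃ T, goA (x :: l) = x :: T
  | [] => ⟨[], goA_of_length_le_two (by simp)⟩
  | [y] => ⟨[y], goA_of_length_le_two (by simp)⟩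
  | y :: z :: r => by
    by_cases h : MergesA x y z
    · rw [goA_of_mergesA h]
      exact exists_goA_cons_eq_cons x r
    · exact ⟨_, goA_of_not_mergesA h⟩

theorem length_goA_le (l : List (Fin 2 × Bool)) : (goA l).length ≤ l.length := by
  induction l using goA.induct with
  | case1 x y z r h ih => rw [goA_of_mergesA h]; simp only [List.length_cons] at ih ⊢; omega
  | case2 x y z r h ih => rw [goA_of_not_mergesA h]; simpa using ih
  | case3 l h => rw [goA.eq_2 l h]

theorem goA_eq_self_of_length_eq : (goA l).length = l.length → goA l = l := by
  induction l using goA.induct with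
  | case1 x y z r h _ =>
    have := length_goA_le (x :: r)
    rw [goA_of_mergesA h]; simp only [List.length_cons] at this ⊢; omega
  | case2 x y z r h ih =>
    rw [goA_of_not_mergesA h]; simpa using ih
  | case3 l h => exact fun _ => goA.eq_2 l h

theorem IsAlternating.goA (hl : IsAlternating l) : IsAlternating (goA l) := by
  induction l using goA.induct with
  | case1 x y z r h ih =>
    rw [goA_of_mergesA h]; exact ih (hl.of_cons_cons_cons (congrArg Prod.fst (MergesA.eq h)))
  | case2 x y z r h ih =>
    obtain ⟨T, hT⟩ := exists_goA_cons_eq_cons y (z :: r)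
    rw [goA_of_not_mergesA h, hT]
    rw [hT] at ih
    exact List.isChain_cons_cons.mpr ⟨(List.isChain_cons_cons.mp hl).1, ih hl.tail⟩
  | case3 l h => rwa [goA.eq_2 l h]

theorem goA_goA (l : List (Fin 2 × Bool)) : goA (goA l) = goA l := by
  induction l using goA.induct with
  | case1 x y z r h ih => rwa [goA_of_mergesA h]
  | case2 x y z r h ih =>
    rw [goA_of_not_mergesA h]
    by_cases hxy : x.1 = 0 ∧ y.1 = 1
    · obtain ⟨T, hT⟩ := exists_goA_cons_eq_cons z r
      have hy : ¬(y.1 = 0 ∧ z.1 = 1) := fun hy => by simp [hxy.2] at hy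
      rw [goA_cons_cons hy, hT] at ih ⊢
      rw [goA_of_not_mergesA h, ih]
    · obtain ⟨T, hT⟩ := exists_goA_cons_eq_cons y (z :: r)
      rw [hT] at ih ⊢
      rw [goA_cons_cons hxy, ih]
  | case3 l h => rw [goA.eq_2 l h, goA.eq_2 l h]

theorem goA_append_cons (hc : c.1 = 0) :
    ∀ l, goA (l ++ c :: r) = goA (l ++ [c]) ++ (goA (c :: r)).tail
  | [] => by
    obtain ⟨T, hT⟩ := exists_goA_cons_eq_cons c r
    simp [hT, goA_of_length_le_two]
  | [x] => by
    have hxc : ¬(x.1 = 0 ∧ c.1 = 1) := fun h => by simp [hc] at h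
    obtain ⟨T, hT⟩ := exists_goA_cons_eq_cons c r
    simp [goA_cons_cons hxc, hT, goA_of_length_le_two]
  | x :: y :: l => by
    obtain ⟨z, t, hzt⟩ : ∃ z t, l ++ [c] = z :: t :=
      ⟨_, _, (List.cons_head_tail (by simp)).symm⟩
    have hl : l ++ c :: r = z :: (t ++ r) := by rw [List.append_cons, hzt, List.cons_append]
    simp only [List.cons_append, hl, hzt]
    by_cases h : MergesA x y z
    · rw [goA_of_mergesA h, goA_of_mergesA h, h.eq, ← hl, ← hzt, goA_append_cons hc l]
    · rw [goA_of_not_mergesA h, goA_of_not_mergesA h, ← hl, ← hzt, List.cons_append,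
        ← List.cons_append, goA_append_cons hc (y :: l), List.cons_append]

theorem invRev_cons' (x : Fin 2 × Bool) (l : List (Fin 2 × Bool)) :
    invRev (x :: l) = invRev l ++ [(x.1, !x.2)] := by
  simp [invRev]

theorem goA_invRev : ∀ l, IsAlternating l → goA (invRev l) = invRev (goA l)
  | [], _ | [_], _ | [_, _], _ => by simp [goA_of_length_le_two]
  | x :: y :: z :: l, hl => by
    obtain ⟨hxy, hyz⟩ : x.1 ≠ y.1 ∧ y.1 ≠ z.1 :=
      ⟨(List.isChain_cons_cons.mp hl).1, (List.isChain_cons_cons.mp hl.tail).1⟩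
    by_cases hx : x.1 = 0
    · have hy : y.1 = 1 := by omega
      have e : invRev (x :: y :: z :: l) =
          invRev l ++ (z.1, !z.2) :: [(y.1, !y.2), (x.1, !x.2)] := by simp [invRev]
      rw [e, goA_append_cons (by simp; omega), ← invRev_cons', goA_invRev (z :: l) hl.tail.tail]
      by_cases h : MergesA x y z
      · have h' : MergesA (z.1, !z.2) (y.1, !y.2) (x.1, !x.2) := by simp_all [MergesA]
        rw [goA_of_mergesA h, goA_of_mergesA h', MergesA.eq h]
        simp [goA_of_length_le_two]
      · have h' : ¬MergesA (z.1, !z.2) (y.1, !y.2) (x.1, !x.2) := by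
          simp_all [MergesA, eq_comm]
        rw [goA_of_not_mergesA h, goA_of_not_mergesA h', goA_cons_cons (x := y) (by simp [hy])]
        simp [invRev_cons', goA_of_length_le_two]
    · have e : invRev (x :: y :: z :: l) = invRev (z :: l) ++ (y.1, !y.2) :: [(x.1, !x.2)] := by
        simp [invRev]
      rw [e, goA_append_cons (by simp; omega), ← invRev_cons', goA_invRev (y :: z :: l) hl.tail,
        goA_cons_cons (x := x) (by simp [hx])]
      simp [invRev_cons', goA_of_length_le_two]

end Word

def swapLetter (p : Fin 2 × Bool) : Fin 2 × Bool := (if p.1 = 0 then 1 else 0, p.2)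

theorem swapLetter_fst_inj {p q : Fin 2 × Bool} :
    (swapLetter p).1 = (swapLetter q).1 ↔ p.1 = q.1 := by
  rcases p with ⟨i, _⟩; rcases q with ⟨j, _⟩
  fin_cases i <;> fin_cases j <;> simp [swapLetter]

theorem isAlternating_map_swapLetter {l : List (Fin 2 × Bool)} :
    IsAlternating (l.map swapLetter) ↔ IsAlternating l := by
  simp only [IsAlternating, List.isChain_map, ne_eq, swapLetter_fst_inj]

theorem goB_map_swapLetter (l : List (Fin 2 × Bool)) :
    goB (l.map swapLetter) = (goA l).map swapLetter := by
  have hmerge : ∀ x y z : Fin 2 × Bool, ((swapLetter x).1 = 1 ∧ (swapLetter y).1 = 0 ∧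
      (swapLetter z).1 = 1 ∧ (swapLetter x).2 = (swapLetter z).2) ↔ MergesA x y z := by
    rintro ⟨i, _⟩ ⟨j, _⟩ ⟨k, _⟩
    fin_cases i <;> fin_cases j <;> fin_cases k <;> simp [swapLetter, MergesA]
  induction l using goA.induct with
  | case1 x y z r h ih =>
    rw [goA_of_mergesA h, ← ih, List.map_cons, List.map_cons, List.map_cons, goB.eq_1,
      if_pos ((hmerge x y z).mpr h), List.map_cons]
  | case2 x y z r h ih =>
    rw [goA_of_not_mergesA h]
    simp only [List.map_cons] at ih ⊢
    rw [goB.eq_1, if_neg (fun h' => h ((hmerge x y z).mp h')), ih]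
  | case3 l h =>
    rw [goA.eq_2 l h]
    refine goB.eq_2 _ fun x y z r hl => ?_
    rcases l with _ | ⟨_, _ | ⟨_, _ | ⟨_, _⟩⟩⟩
    iterate 3 simp at hl
    exact h _ _ _ _ rfl

theorem mem_Alt {w : W} : w ∈ Alt ↔ IsAlternating w.toWord := Iff.rfl

theorem IsAlternating.isReduced {l : List (Fin 2 × Bool)} (h : IsAlternating l) : IsReduced l :=
  h.imp fun _ _ hne heq => absurd heq hne

theorem toWord_mk_of_isAlternating {l : List (Fin 2 × Bool)} (h : IsAlternating l) :
    (mk l).toWord = l := by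
  rw [toWord_mk, h.isReduced.reduce_eq]

section Alpha

variable {w : W}

theorem alphaF_mk {l : List (Fin 2 × Bool)} (h : IsAlternating l) :
    alphaF (mk l) = mk (goA l) := by
  rw [alphaF, toWord_mk_of_isAlternating h]

theorem toWord_alphaF (hw : w ∈ Alt) : (alphaF w).toWord = goA w.toWord :=
  toWord_mk_of_isAlternating (mem_Alt.mp hw).goA

theorem alphaF_inv (hw : w ∈ Alt) : alphaF w⁻¹ = (alphaF w)⁻¹ := by
  rw [alphaF, alphaF, toWord_inv, goA_invRev _ hw, inv_mk]

theorem alphaF_alphaF (hw : w ∈ Alt) : alphaF (alphaF w) = alphaF w := by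
  rw [alphaF, toWord_alphaF hw, goA_goA]
  rfl

theorem length_toWord_alphaF_le (hw : w ∈ Alt) : (alphaF w).toWord.length ≤ w.toWord.length := by
  rw [toWord_alphaF hw]
  exact length_goA_le _

theorem length_toWord_alphaF_eq_iff (hw : w ∈ Alt) :
    (alphaF w).toWord.length = w.toWord.length ↔ alphaF w = w := by
  refine ⟨fun h => ?_, fun h => by rw [h]⟩
  rw [toWord_alphaF hw] at h
  rw [alphaF, goA_eq_self_of_length_eq h, mk_toWord]

theorem alphaF_mul_letter_mul {v₁ v₂ : W} {s : Bool}
    (h : IsAlternating (v₁.toWord ++ [(0, s)] ++ v₂.toWord)) :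
    alphaF (v₁ * letter 0 s * v₂) =
      alphaF (v₁ * letter 0 s) * (letter 0 s)⁻¹ * alphaF (letter 0 s * v₂) := by
  have h₁ : IsAlternating (v₁.toWord ++ [(0, s)]) := h.infix ⟨[], v₂.toWord, by simp⟩
  have h₂ : IsAlternating ((0, s) :: v₂.toWord) := h.infix ⟨v₁.toWord, [], by simp⟩
  have h₀ : IsAlternating (v₁.toWord ++ (0, s) :: v₂.toWord) := by simpa using h
  obtain ⟨T, hT⟩ := exists_goA_cons_eq_cons (0, s) v₂.toWord
  have e₀ : v₁ * letter 0 s * v₂ = mk (v₁.toWord ++ (0, s) :: v₂.toWord) := by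
    conv_lhs => rw [← mk_toWord (x := v₁), ← mk_toWord (x := v₂)]
    rw [letter, mul_mk, mul_mk]
    simp
  have e₁ : v₁ * letter 0 s = mk (v₁.toWord ++ [(0, s)]) := by
    conv_lhs => rw [← mk_toWord (x := v₁)]
    rw [letter, mul_mk]
  have e₂ : letter 0 s * v₂ = mk ((0, s) :: v₂.toWord) := by
    conv_lhs => rw [← mk_toWord (x := v₂)]
    rw [letter, mul_mk, List.singleton_append]
  rw [e₀, e₁, e₂, alphaF_mk h₀, alphaF_mk h₁, alphaF_mk h₂, goA_append_cons rfl, hT,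
    List.tail_cons, ← mul_mk, letter, show (0, s) :: T = [(0, s)] ++ T from rfl, ← mul_mk]
  group

end Alpha

section Psi

variable {w : W}

theorem psiF_mk (l : List (Fin 2 × Bool)) : psiF (mk l) = mk (l.map swapLetter) :=
  map.mk

theorem toWord_psiF (w : W) : (psiF w).toWord = w.toWord.map swapLetter := by
  rw [← mk_toWord (x := w), psiF_mk, toWord_mk, mk_toWord, IsReduced.reduce_eq]
  exact (List.isChain_map _).mpr <|
    isReduced_toWord.imp fun _ _ h hfst => h (swapLetter_fst_inj.mp hfst)

theorem length_toWord_psiF (w : W) : (psiF w).toWord.length = w.toWord.length := by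
  rw [toWord_psiF, List.length_map]

theorem psiF_mem_Alt (hw : w ∈ Alt) : psiF w ∈ Alt := by
  rw [mem_Alt, toWord_psiF, isAlternating_map_swapLetter]
  exact hw

theorem psiF_psiF (w : W) : psiF (psiF w) = w := by
  rw [← MonoidHom.comp_apply, ← MonoidHom.id_apply W w]
  congr 1
  ext i
  fin_cases i <;> rfl

theorem psiF_injective : Function.Injective psiF :=
  Function.LeftInverse.injective psiF_psiF

theorem psiF_letter_zero (s : Bool) : psiF (letter 0 s) = letter 1 s := psiF_mk _

theorem psiF_letter_one (s : Bool) : psiF (letter 1 s) = letter 0 s := psiF_mk _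

theorem psiF_alphaF (w : W) : psiF (alphaF w) = betaF (psiF w) := by
  rw [alphaF, betaF, psiF_mk, toWord_psiF, goB_map_swapLetter]

theorem betaF_eq_psiF_alphaF_psiF (w : W) : betaF w = psiF (alphaF (psiF w)) := by
  rw [psiF_alphaF, psiF_psiF]

theorem psiF_betaF (w : W) : psiF (betaF w) = alphaF (psiF w) := by
  rw [betaF_eq_psiF_alphaF_psiF, psiF_psiF]

theorem betaF_inv (hw : w ∈ Alt) : betaF w⁻¹ = (betaF w)⁻¹ := by
  simp only [betaF_eq_psiF_alphaF_psiF, MonoidHom.map_inv, alphaF_inv (psiF_mem_Alt hw)]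

theorem betaF_betaF (hw : w ∈ Alt) : betaF (betaF w) = betaF w := by
  simp only [betaF_eq_psiF_alphaF_psiF, psiF_psiF, alphaF_alphaF (psiF_mem_Alt hw)]

theorem length_toWord_betaF_le (hw : w ∈ Alt) : (betaF w).toWord.length ≤ w.toWord.length := by
  rw [betaF_eq_psiF_alphaF_psiF, length_toWord_psiF, ← length_toWord_psiF w]
  exact length_toWord_alphaF_le (psiF_mem_Alt hw)

theorem length_toWord_betaF_eq_iff (hw : w ∈ Alt) :
    (betaF w).toWord.length = w.toWord.length ↔ betaF w = w := by
  rw [betaF_eq_psiF_alphaF_psiF, length_toWord_psiF, ← length_toWord_psiF w,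
    length_toWord_alphaF_eq_iff (psiF_mem_Alt hw), ← psiF_injective.eq_iff, psiF_psiF]

theorem betaF_mul_letter_mul {v₁ v₂ : W} {s : Bool}
    (h : IsAlternating (v₁.toWord ++ [(1, s)] ++ v₂.toWord)) :
    betaF (v₁ * letter 1 s * v₂) =
      betaF (v₁ * letter 1 s) * (letter 1 s)⁻¹ * betaF (letter 1 s * v₂) := by
  have h' : IsAlternating ((psiF v₁).toWord ++ [(0, s)] ++ (psiF v₂).toWord) := by
    simpa [toWord_psiF, swapLetter] using isAlternating_map_swapLetter.mpr h
  simpa only [betaF_eq_psiF_alphaF_psiF, MonoidHom.map_mul, MonoidHom.map_inv, psiF_letter_zero,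
    psiF_letter_one, psiF_psiF] using congrArg psiF (alphaF_mul_letter_mul h')

end Psi

theorem alphaF_betaF_properties :
    (∀ w ∈ Alt, alphaF w⁻¹ = (alphaF w)⁻¹ ∧ betaF w⁻¹ = (betaF w)⁻¹) ∧
    (∀ w ∈ Alt, psiF (alphaF w) = betaF (psiF w) ∧ psiF (betaF w) = alphaF (psiF w)) ∧
    (∀ w ∈ Alt,
      alphaF (alphaF w) = alphaF w ∧
      (alphaF w).toWord.length ≤ w.toWord.length ∧
      ((alphaF w).toWord.length = w.toWord.length ↔ alphaF w = w) ∧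
      betaF (betaF w) = betaF w ∧
      (betaF w).toWord.length ≤ w.toWord.length ∧
      ((betaF w).toWord.length = w.toWord.length ↔ betaF w = w)) ∧
    (∀ (v₁ v₂ : W) (s : Bool),
      (List.Chain' (fun p q : Fin 2 × Bool => p.1 ≠ q.1)
          (v₁.toWord ++ [((0 : Fin 2), s)] ++ v₂.toWord) →
        alphaF (v₁ * letter 0 s * v₂) =
          alphaF (v₁ * letter 0 s) * (letter 0 s)⁻¹ * alphaF (letter 0 s * v₂)) ∧
      (List.Chain' (fun p q : Fin 2 × Bool => p.1 ≠ q.1)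
          (v₁.toWord ++ [((1 : Fin 2), s)] ++ v₂.toWord) →
        betaF (v₁ * letter 1 s * v₂) =
          betaF (v₁ * letter 1 s) * (letter 1 s)⁻¹ * betaF (letter 1 s * v₂))) := by
  refine ⟨fun w hw => ⟨alphaF_inv hw, betaF_inv hw⟩, fun w _ => ⟨psiF_alphaF w, psiF_betaF w⟩,
    fun w hw => ⟨alphaF_alphaF hw, length_toWord_alphaF_le hw, length_toWord_alphaF_eq_iff hw,
      betaF_betaF hw, length_toWord_betaF_le hw, length_toWord_betaF_eq_iff hw⟩,
    fun _ _ _ => ⟨alphaF_mul_letter_mul, betaF_mul_letter_mul⟩⟩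
end

section
/- If (x₁,x₂,x₃) ∼ (y₁,y₂,y₃) are equivalent triples of elements of F₂ and x₁, x₂, x₃ ∈ 𝒜, then y₁, y₂, y₃ ∈ 𝒜; moreover in this case (α(x₁),α(x₂),α(x₃)) ∼ (α(y₁),α(y₂),α(y₃)) and (β(x₁),β(x₂),β(x₃)) ∼ (β(y₁),β(y₂),β(y₃)). -/
open FreeGroup

/-- The automorphism `φ_a : a ↦ a⁻¹, b ↦ b` of `F₂`. -/
def phiaF : W →* W :=
  FreeGroup.lift (fun i : Fin 2 => if i = 0 then (FreeGroup.of (0 : Fin 2))⁻¹ else FreeGroup.of 1)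

/-- The automorphism `φ_b : a ↦ a, b ↦ b⁻¹` of `F₂`. -/
def phibF : W →* W :=
  FreeGroup.lift (fun i : Fin 2 => if i = 0 then FreeGroup.of 0 else (FreeGroup.of (1 : Fin 2))⁻¹)

/-- Generating moves for the equivalence relation `∼` on triples:
rotation, inversion, and the sign-change automorphisms `φ_a`, `φ_b`. -/
def TripleBase : W × W × W → W × W × W → Prop := fun t t' =>
  t' = (t.2.1, t.2.2, t.1) ∨
  t' = ((t.2.2)⁻¹, (t.2.1)⁻¹, (t.1)⁻¹) ∨
  t' = (phiaF t.1, phiaF t.2.1, phiaF t.2.2) ∨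
  t' = (phibF t.1, phibF t.2.1, phibF t.2.2)

/-- The equivalence relation `∼` on triples of elements of `F₂`. -/
def TripleEquiv : W × W × W → W × W × W → Prop := Relation.EqvGen TripleBase

/-!
Both α and β are instances of one list operation, `List.collapse`, which scans a word from the
left and rewrites `x y x ↦ x` whenever `x` is a letter of the chosen generator and `y` is not.
Since these rewrites can just as well be performed from the right, `collapse` commutes with
reversal, and it obviously commutes with any relabelling of letters that fixes the generator.
Hence α and β commute with inversion and with the sign changes φ_a, φ_b, so they send every
generating move of `∼` to a generating move. Alternation only depends on the generators of the
letters of the reduced word, which inversion and sign changes do not change.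
-/

theorem Relation.EqvGen.map {α β : Type*} {r : α → α → Prop} {s : β → β → Prop} (f : α → β)
    (hf : ∀ a b, r a b → s (f a) (f b)) {a b : α} (h : Relation.EqvGen r a b) :
    Relation.EqvGen s (f a) (f b) :=
  Quot.eqvGen_exact <| congrArg (Quot.lift (fun a => Quot.mk s (f a)) fun a b hab =>
    Quot.sound (hf a b hab)) (Quot.eqvGen_sound h)

theorem Relation.EqvGen.iff_of_rel {α : Type*} {r : α → α → Prop} {P : α → Prop}
    (hP : ∀ a b, r a b → (P a ↔ P b)) {a b : α} (h : Relation.EqvGen r a b) : P a ↔ P b :=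
  Iff.of_eq <| congrArg (Quot.lift P fun a b hab => propext (hP a b hab)) (Quot.eqvGen_sound h)

namespace List

variable {α β : Type*} [DecidableEq α] (p : α → Prop) [DecidablePred p]

def collapse : List α → List α
  | x :: y :: z :: l =>
    if x = z ∧ p x ∧ ¬ p y then collapse (x :: l) else x :: collapse (y :: z :: l)
  | l => l
termination_by l => l.length

@[simp] theorem collapse_nil : collapse p ([] : List α) = [] := by simp [collapse]
@[simp] theorem collapse_singleton (x : α) : collapse p [x] = [x] := by simp [collapse]
@[simp] theorem collapse_pair (x y : α) : collapse p [x, y] = [x, y] := by simp [collapse]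

theorem collapse_cons₃ (x y z : α) (l : List α) :
    collapse p (x :: y :: z :: l) =
      if x = z ∧ p x ∧ ¬ p y then collapse p (x :: l) else x :: collapse p (y :: z :: l) := by
  rw [collapse]

theorem collapse_append₃ : ∀ (l : List α) (x y z : α),
    collapse p (l ++ [x, y, z]) =
      if x = z ∧ p x ∧ ¬ p y then collapse p (l ++ [x]) else collapse p (l ++ [x, y]) ++ [z]
  | [], x, y, z => by simp [collapse_cons₃]
  | [a], x, y, z => by
    by_cases h : x = z ∧ p x ∧ ¬ p y <;> simp [collapse_cons₃, h] <;> grind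
  | [a, b], x, y, z => by
    by_cases h : x = z ∧ p x ∧ ¬ p y <;> simp [collapse_cons₃, h] <;> grind
  | a :: b :: c :: l, x, y, z => by
    have ih₁ := collapse_append₃ (a :: l) x y z
    have ih₂ := collapse_append₃ (b :: c :: l) x y z
    simp only [cons_append] at ih₁ ih₂ ⊢
    simp only [collapse_cons₃]
    split_ifs at * <;> simp_all
termination_by l => l.length

theorem collapse_reverse : ∀ l : List α, collapse p l.reverse = (collapse p l).reverse
  | x :: y :: z :: l => by
    have hx : collapse p (l.reverse ++ [x]) = (collapse p (x :: l)).reverse := by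
      simpa using collapse_reverse (x :: l)
    have hy : collapse p (l.reverse ++ [z, y]) = (collapse p (y :: z :: l)).reverse := by
      simpa using collapse_reverse (y :: z :: l)
    rw [show (x :: y :: z :: l).reverse = l.reverse ++ [z, y, x] by simp, collapse_append₃,
      collapse_cons₃]
    by_cases h : x = z ∧ p x ∧ ¬ p y
    · obtain ⟨rfl, hx', hy'⟩ := h
      simp [hx', hy', hx]
    · have h' : ¬ (z = x ∧ p z ∧ ¬ p y) := by rintro ⟨rfl, h'⟩; exact h ⟨rfl, h'⟩
      simp [h, h', hy]
  | [] | [_] | [_, _] => by simp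
termination_by l => l.length

theorem collapse_map [DecidableEq β] (q : β → Prop) [DecidablePred q] {f : α → β}
    (hf : Function.Injective f) (hfq : ∀ a, q (f a) ↔ p a) :
    ∀ l : List α, collapse q (l.map f) = (collapse p l).map f
  | x :: y :: z :: l => by
    simp only [map_cons, collapse_cons₃, hf.eq_iff, hfq]
    split_ifs
    · exact collapse_map q hf hfq (x :: l)
    · exact congrArg (f x :: ·) (collapse_map q hf hfq (y :: z :: l))
  | [] | [_] | [_, _] => by simp
termination_by l => l.length

end List

namespace FreeGroup

variable {ι : Type*}

def flipLetter (s : ι → Bool) (q : ι × Bool) : ι × Bool := (q.1, xor (s q.1) q.2)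

theorem flipLetter_injective (s : ι → Bool) : Function.Injective (flipLetter s) := by
  rintro ⟨i, b⟩ ⟨j, c⟩ h
  simp only [flipLetter, Prod.mk.injEq] at h
  obtain ⟨rfl, h⟩ := h
  simp_all

theorem invRev_eq_map_flipLetter (l : List (ι × Bool)) :
    invRev l = (l.map (flipLetter fun _ => true)).reverse := by
  simp [invRev, flipLetter]

def signFlip (s : ι → Bool) : FreeGroup ι →* FreeGroup ι :=
  FreeGroup.lift fun i => bif s i then (of i)⁻¹ else of i

theorem signFlip_mk (s : ι → Bool) : ∀ l : List (ι × Bool),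
    signFlip s (mk l) = mk (l.map (flipLetter s))
  | [] => by simp [← one_eq_mk]
  | (i, b) :: l => by
    rw [← List.singleton_append, ← mul_mk, _root_.map_mul, signFlip_mk s l, List.map_append,
      ← mul_mk]
    congr 1
    cases b <;> cases h : s i <;> simp [signFlip, flipLetter, of, inv_mk, invRev, h]

variable [DecidableEq ι]

theorem toWord_signFlip (s : ι → Bool) (w : FreeGroup ι) :
    (signFlip s w).toWord = w.toWord.map (flipLetter s) := by
  rw [← mk_toWord (x := w), signFlip_mk, toWord_mk, mk_toWord, IsReduced.reduce_eq]
  refine (List.isChain_map _).2 (isReduced_toWord.imp ?_)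
  rintro ⟨i, b⟩ ⟨j, c⟩ h rfl
  simp_all [flipLetter]

def collapseAt (i : ι) (w : FreeGroup ι) : FreeGroup ι :=
  mk (w.toWord.collapse fun q => q.1 = i)

theorem collapseAt_inv (i : ι) (w : FreeGroup ι) : collapseAt i w⁻¹ = (collapseAt i w)⁻¹ := by
  rw [collapseAt, collapseAt, toWord_inv, invRev_eq_map_flipLetter, List.collapse_reverse,
    List.collapse_map (fun q => q.1 = i) _ (flipLetter_injective _) fun _ => Iff.rfl, inv_mk,
    invRev_eq_map_flipLetter]

theorem collapseAt_signFlip (i : ι) (s : ι → Bool) (w : FreeGroup ι) :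
    collapseAt i (signFlip s w) = signFlip s (collapseAt i w) := by
  rw [collapseAt, collapseAt, toWord_signFlip,
    List.collapse_map (fun q => q.1 = i) _ (flipLetter_injective _) fun _ => Iff.rfl, signFlip_mk]

end FreeGroup

theorem fin_two_collapse_cond_iff {i j : Fin 2} (hij : i ≠ j) (x y z : Fin 2 × Bool) :
    (x.1 = i ∧ y.1 = j ∧ z.1 = i ∧ x.2 = z.2) ↔ (x = z ∧ x.1 = i ∧ ¬ y.1 = i) := by
  rw [Prod.ext_iff]
  have : y.1 = j ↔ ¬ y.1 = i := by omega
  grind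

theorem goA_eq_collapse : ∀ l, goA l = l.collapse fun q => q.1 = 0
  | x :: y :: z :: l => by
    rw [goA, List.collapse_cons₃, goA_eq_collapse (x :: l), goA_eq_collapse (y :: z :: l)]
    exact if_congr (fin_two_collapse_cond_iff (by decide) x y z) rfl rfl
  | [] | [_] | [_, _] => by simp [goA]
termination_by l => l.length

theorem goB_eq_collapse : ∀ l, goB l = l.collapse fun q => q.1 = 1
  | x :: y :: z :: l => by
    rw [goB, List.collapse_cons₃, goB_eq_collapse (x :: l), goB_eq_collapse (y :: z :: l)]
    exact if_congr (fin_two_collapse_cond_iff (by decide) x y z) rfl rfl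
  | [] | [_] | [_, _] => by simp [goB]
termination_by l => l.length

theorem alphaF_eq_collapseAt : alphaF = collapseAt 0 :=
  funext fun w => by rw [alphaF, collapseAt, goA_eq_collapse]

theorem betaF_eq_collapseAt : betaF = collapseAt 1 :=
  funext fun w => by rw [betaF, collapseAt, goB_eq_collapse]

theorem phiaF_eq_signFlip : phiaF = signFlip ![true, false] := by
  ext i
  fin_cases i <;> simp [phiaF, signFlip]

theorem phibF_eq_signFlip : phibF = signFlip ![false, true] := by
  ext i
  fin_cases i <;> simp [phibF, signFlip]

theorem mem_alt_iff (w : W) : w ∈ Alt ↔ w.toWord.IsChain fun p q => p.1 ≠ q.1 := Iff.rfl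

theorem inv_mem_alt_iff (w : W) : w⁻¹ ∈ Alt ↔ w ∈ Alt := by
  simp [mem_alt_iff, toWord_inv, invRev, List.isChain_reverse, List.isChain_map, ne_comm]

theorem signFlip_mem_alt_iff (s : Fin 2 → Bool) (w : W) : signFlip s w ∈ Alt ↔ w ∈ Alt := by
  simp [mem_alt_iff, toWord_signFlip, List.isChain_map, flipLetter]

theorem TripleBase.mem_alt_iff {t t' : W × W × W} (h : TripleBase t t') :
    t ∈ Alt ×ˢ Alt ×ˢ Alt ↔ t' ∈ Alt ×ˢ Alt ×ˢ Alt := by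
  rw [TripleBase, phiaF_eq_signFlip, phibF_eq_signFlip] at h
  rcases h with rfl | rfl | rfl | rfl <;> simp [inv_mem_alt_iff, signFlip_mem_alt_iff] <;> tauto

theorem TripleEquiv.mem_alt_iff {t t' : W × W × W} (h : TripleEquiv t t') :
    t ∈ Alt ×ˢ Alt ×ˢ Alt ↔ t' ∈ Alt ×ˢ Alt ×ˢ Alt :=
  Relation.EqvGen.iff_of_rel (r := TripleBase) (fun _ _ => TripleBase.mem_alt_iff) h

theorem TripleEquiv.map {f : W → W} (hinv : ∀ w, f w⁻¹ = (f w)⁻¹)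
    (ha : ∀ w, f (phiaF w) = phiaF (f w)) (hb : ∀ w, f (phibF w) = phibF (f w))
    {t t' : W × W × W} (h : TripleEquiv t t') :
    TripleEquiv (f t.1, f t.2.1, f t.2.2) (f t'.1, f t'.2.1, f t'.2.2) := by
  refine Relation.EqvGen.map (fun t => (f t.1, f t.2.1, f t.2.2)) ?_ h
  rintro t _ (rfl | rfl | rfl | rfl) <;> simp [TripleBase, hinv, ha, hb]

theorem TripleEquiv.map_collapseAt (i : Fin 2) {t t' : W × W × W} (h : TripleEquiv t t') :
    TripleEquiv (collapseAt i t.1, collapseAt i t.2.1, collapseAt i t.2.2)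
      (collapseAt i t'.1, collapseAt i t'.2.1, collapseAt i t'.2.2) :=
  h.map (collapseAt_inv i) (by simp [phiaF_eq_signFlip, collapseAt_signFlip])
    (by simp [phibF_eq_signFlip, collapseAt_signFlip])

/-- **Proposition.** If `(x₁,x₂,x₃) ∼ (y₁,y₂,y₃)` and `x₁,x₂,x₃` are alternating, then
`y₁,y₂,y₃` are alternating; moreover in that case `α(x₁,x₂,x₃) ∼ α(y₁,y₂,y₃)` and
`β(x₁,x₂,x₃) ∼ β(y₁,y₂,y₃)`. -/
theorem tripleEquiv_alt_and_alpha_beta (x₁ x₂ x₃ y₁ y₂ y₃ : W)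
    (h : TripleEquiv (x₁, x₂, x₃) (y₁, y₂, y₃))
    (h₁ : x₁ ∈ Alt) (h₂ : x₂ ∈ Alt) (h₃ : x₃ ∈ Alt) :
    (y₁ ∈ Alt ∧ y₂ ∈ Alt ∧ y₃ ∈ Alt) ∧
    TripleEquiv (alphaF x₁, alphaF x₂, alphaF x₃) (alphaF y₁, alphaF y₂, alphaF y₃) ∧
    TripleEquiv (betaF x₁, betaF x₂, betaF x₃) (betaF y₁, betaF y₂, betaF y₃) := by
  refine ⟨h.mem_alt_iff.1 ⟨h₁, h₂, h₃⟩, ?_, ?_⟩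
  · rw [alphaF_eq_collapseAt]
    exact h.map_collapseAt 0
  · rw [betaF_eq_collapseAt]
    exact h.map_collapseAt 1
end
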